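/- arXiv:2308.00453 — 3 statements merged into one kernel-verified Lean document; each statement's English description precedes it below -/
import Mathlib

section
/- Let n ≥ 3 and η > 0, let z_1,…,z_n be distinct points of D all contained in a hyperbolic disc of radius η, and let w_1,…,w_n ∈ D with Δ^0_j = w_j. Then there exist constants C > 0 and ε_0 > 0, depending only on η and n, such that: if 0 < ε ≤ ε_0 and β(Δ^k_j, Δ^k_{k+1}) ≤ ε·β(z_j, z_{k+1}) for all 1 ≤ k ≤ n−2 and k+2 ≤ j ≤ n (in particular these hyperbolic difference quotients lie in D), then β(Δ^k_i, Δ^k_j) ≤ C·ε·β(z_i, z_j) for all 1 ≤ k ≤ n−2 and k+1 ≤ i < j ≤ n. -/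
open Complex Filter Set

noncomputable section

/-- The open unit disc in the complex plane. -/
def unitD : Set ℂ := {z : ℂ | ‖z‖ < 1}

/-- The pseudohyperbolic distance ρ(z,w) = |z-w| / |1 - conj(w) z|. -/
def hrho (z w : ℂ) : ℝ := ‖(z - w) / (1 - (starRingEnd ℂ) w * z)‖

/-- The hyperbolic distance β(z,w) = log((1+ρ)/(1-ρ)). -/
def hbeta (z w : ℂ) : ℝ := Real.log ((1 + hrho z w) / (1 - hrho z w))

/-- The hyperbolic disc of center z0 and radius R. -/
def hdisc (z0 : ℂ) (R : ℝ) : Set ℂ := {z : ℂ | z ∈ unitD ∧ hbeta z z0 < R}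

/-- The complex pseudohyperbolic "distance" [a,b] = (b-a)/(1-conj(b) a). -/
def mstar (a b : ℂ) : ℂ := (b - a) / (1 - (starRingEnd ℂ) b * a)

/-- Hyperbolic difference quotients (0-based indices): `hdq z w k j` is Δ^k_{j+1}
of the paper, built from points z 0, z 1, … and values w 0, w 1, …. -/
def hdq (z w : ℕ → ℂ) : ℕ → ℕ → ℂ
  | 0, j => w j
  | k + 1, j => mstar (hdq z w k j) (hdq z w k k) / mstar (z j) (z k)

lemma oneSubMul_ne {z w : ℂ} (hz : (norm : ℂ → ℝ) z < 1) (hw : (norm : ℂ → ℝ) w < 1) :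
    1 - (starRingEnd ℂ) w * z ≠ 0 := by
  intro h
  have h2 : (starRingEnd ℂ) w * z = 1 := by linear_combination -h
  have h1 : (norm : ℂ → ℝ) ((starRingEnd ℂ) w * z) < 1 := by
    rw [norm_mul, Complex.norm_conj]
    nlinarith [norm_nonneg w, norm_nonneg z]
  rw [h2] at h1; simp at h1

lemma key_normSq (z w : ℂ) :
    Complex.normSq (1 - (starRingEnd ℂ) w * z) - Complex.normSq (z - w)
      = (1 - Complex.normSq z) * (1 - Complex.normSq w) := by
  simp only [Complex.normSq_apply, Complex.sub_re, Complex.sub_im, Complex.mul_re,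
    Complex.mul_im, Complex.one_re, Complex.one_im, Complex.conj_re, Complex.conj_im]
  ring

lemma hrho_nonneg (z w : ℂ) : 0 ≤ hrho z w := norm_nonneg _

lemma hrho_lt_one {z w : ℂ} (hz : (norm : ℂ → ℝ) z < 1) (hw : (norm : ℂ → ℝ) w < 1) :
    hrho z w < 1 := by
  have hd := oneSubMul_ne hz hw
  have hz' : Complex.normSq z < 1 := by
    rw [← Complex.sq_norm]; nlinarith [norm_nonneg z]
  have hw' : Complex.normSq w < 1 := by
    rw [← Complex.sq_norm]; nlinarith [norm_nonneg w]
  have h1 : Complex.normSq (z - w) < Complex.normSq (1 - (starRingEnd ℂ) w * z) := by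
    have := key_normSq z w; nlinarith
  have h2 : (norm : ℂ → ℝ) (z - w) < (norm : ℂ → ℝ) (1 - (starRingEnd ℂ) w * z) := by
    rw [Complex.norm_def, Complex.norm_def]
    exact Real.sqrt_lt_sqrt (Complex.normSq_nonneg _) h1
  unfold hrho
  rw [norm_div, div_lt_one (norm_pos_iff.mpr hd)]
  exact h2

lemma hrho_pos {z w : ℂ} (hne : z ≠ w) (hz : (norm : ℂ → ℝ) z < 1) (hw : (norm : ℂ → ℝ) w < 1) :
    0 < hrho z w :=
  norm_pos_iff.mpr (div_ne_zero (sub_ne_zero.mpr hne) (oneSubMul_ne hz hw))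

lemma conj_oneSub (z w : ℂ) :
    (starRingEnd ℂ) (1 - (starRingEnd ℂ) z * w) = 1 - (starRingEnd ℂ) w * z := by
  simp only [map_sub, map_mul, Complex.conj_conj, map_one]
  ring

lemma hrho_comm (z w : ℂ) : hrho z w = hrho w z := by
  unfold hrho
  rw [norm_div, norm_div, norm_sub_rev, ← conj_oneSub w z, Complex.norm_conj]

lemma abs_mstar (a b : ℂ) : (norm : ℂ → ℝ) (mstar a b) = hrho a b := by
  unfold mstar hrho
  rw [norm_div, norm_div, norm_sub_rev]

lemma hrho_mstar_mstar {b z w : ℂ} (hb : (norm : ℂ → ℝ) b < 1) (hz : (norm : ℂ → ℝ) z < 1)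
    (hw : (norm : ℂ → ℝ) w < 1) : hrho (mstar z b) (mstar w b) = hrho z w := by
  have d1 : 1 - (starRingEnd ℂ) b * z ≠ 0 := oneSubMul_ne hz hb
  have d2 : 1 - (starRingEnd ℂ) b * w ≠ 0 := oneSubMul_ne hw hb
  have hcc : (1 : ℂ) - b * (starRingEnd ℂ) w = (starRingEnd ℂ) (1 - (starRingEnd ℂ) b * w) := by
    simp only [map_sub, map_mul, Complex.conj_conj, map_one]
  have d3 : 1 - b * (starRingEnd ℂ) w ≠ 0 := by rw [hcc, map_ne_zero]; exact d2
  have d4 : 1 - (starRingEnd ℂ) w * z ≠ 0 := oneSubMul_ne hz hw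
  have d5 : 1 - (starRingEnd ℂ) b * b ≠ 0 := oneSubMul_ne hb hb
  have i1 : mstar z b - mstar w b
      = (w - z) * (1 - (starRingEnd ℂ) b * b)
        / ((1 - (starRingEnd ℂ) b * z) * (1 - (starRingEnd ℂ) b * w)) := by
    unfold mstar; rw [div_sub_div _ _ d1 d2]; ring
  have i2 : 1 - (starRingEnd ℂ) (mstar w b) * mstar z b
      = (1 - (starRingEnd ℂ) b * b) * (1 - (starRingEnd ℂ) w * z)
        / ((1 - b * (starRingEnd ℂ) w) * (1 - (starRingEnd ℂ) b * z)) := by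
    unfold mstar
    rw [map_div₀, map_sub, map_sub, map_one, map_mul, Complex.conj_conj]
    rw [div_mul_div_comm, one_sub_div (mul_ne_zero d3 d1)]; ring
  have hmain : (mstar z b - mstar w b) / (1 - (starRingEnd ℂ) (mstar w b) * mstar z b)
      = ((w - z) / (1 - (starRingEnd ℂ) w * z))
        * ((1 - b * (starRingEnd ℂ) w) / (1 - (starRingEnd ℂ) b * w)) := by
    rw [i1, i2]; rw [div_div_div_eq, div_mul_div_comm, div_eq_div_iff (mul_ne_zero (mul_ne_zero d1 d2) (mul_ne_zero d5 d4)) (mul_ne_zero d4 d2)]; ring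
  show (norm : ℂ → ℝ) _ = hrho z w
  rw [hmain, norm_mul]
  have hone : (norm : ℂ → ℝ) ((1 - b * (starRingEnd ℂ) w) / (1 - (starRingEnd ℂ) b * w)) = 1 := by
    rw [norm_div, hcc, Complex.norm_conj, div_self ((norm_ne_zero_iff.mpr d2))]
  rw [hone, mul_one]
  unfold hrho
  rw [norm_div, norm_div, norm_sub_rev]

lemma hrho_le_add {a b : ℂ} (ha : (norm : ℂ → ℝ) a < 1) (hb : (norm : ℂ → ℝ) b < 1) :
    hrho a b ≤ ((norm : ℂ → ℝ) a + (norm : ℂ → ℝ) b) / (1 + (norm : ℂ → ℝ) a * (norm : ℂ → ℝ) b) := by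
  set r1 := (norm : ℂ → ℝ) a with hr1
  set r2 := (norm : ℂ → ℝ) b with hr2
  have hr10 : 0 ≤ r1 := norm_nonneg a
  have hr20 : 0 ≤ r2 := norm_nonneg b
  set s := ((starRingEnd ℂ) b * a).re with hs
  have hslb : -(r2 * r1) ≤ s := by
    have h1 : (norm : ℂ → ℝ) ((starRingEnd ℂ) b * a) = r2 * r1 := by
      rw [norm_mul, Complex.norm_conj]
    have h2 := (abs_le.1 (Complex.abs_re_le_norm ((starRingEnd ℂ) b * a))).1
    rw [h1] at h2; exact h2
  have hn1 : Complex.normSq (a - b) = r1^2 + r2^2 - 2*s := by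
    rw [Complex.normSq_sub, ← Complex.sq_norm a, ← Complex.sq_norm b, mul_comm a ((starRingEnd ℂ) b)]
  have hn2 : Complex.normSq (1 - (starRingEnd ℂ) b * a) = 1 - 2*s + (r1*r2)^2 := by
    rw [Complex.normSq_sub, Complex.normSq_one, Complex.normSq_mul, Complex.normSq_conj,
      ← Complex.sq_norm a, ← Complex.sq_norm b, one_mul, Complex.conj_re]
    ring
  have hne : (1:ℝ) + r1 * r2 > 0 := by nlinarith
  have hdpos : 0 < (norm : ℂ → ℝ) (1 - (starRingEnd ℂ) b * a) :=
    norm_pos_iff.mpr (oneSubMul_ne ha hb)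
  rw [hrho, norm_div, div_le_div_iff₀ hdpos hne]
  have hsq : ((norm : ℂ → ℝ) (a - b) * (1 + r1*r2))^2
      ≤ ((r1 + r2) * (norm : ℂ → ℝ) (1 - (starRingEnd ℂ) b * a))^2 := by
    rw [mul_pow, mul_pow, Complex.sq_norm, Complex.sq_norm, hn1, hn2]
    nlinarith [mul_nonneg (by linarith : (0:ℝ) ≤ s + r2*r1)
      (by nlinarith [mul_nonneg (by linarith : (0:ℝ) ≤ 1-r1) (by linarith : (0:ℝ) ≤ 1-r2),
        mul_nonneg (by linarith : (0:ℝ) ≤ 1+r1) (by linarith : (0:ℝ) ≤ 1+r2)] :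
        (0:ℝ) ≤ (1 + r1*r2)^2 - (r1+r2)^2)]
  have hx : 0 ≤ (norm : ℂ → ℝ) (a - b) * (1 + r1*r2) := by positivity
  have hy : 0 ≤ (r1 + r2) * (norm : ℂ → ℝ) (1 - (starRingEnd ℂ) b * a) := by positivity
  have := Real.sqrt_le_sqrt hsq
  rwa [Real.sqrt_sq hx, Real.sqrt_sq hy] at this

lemma hrho_le_sub_div {a b : ℂ} (h : (norm : ℂ → ℝ) a * (norm : ℂ → ℝ) b < 1) :
    hrho a b ≤ (norm : ℂ → ℝ) (a - b) / (1 - (norm : ℂ → ℝ) a * (norm : ℂ → ℝ) b) := by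
  have h1 : 1 - (norm : ℂ → ℝ) a * (norm : ℂ → ℝ) b ≤ (norm : ℂ → ℝ) (1 - (starRingEnd ℂ) b * a) := by
    have h2 := norm_sub_norm_le (1 : ℂ) ((starRingEnd ℂ) b * a)
    simp only [norm_one, norm_mul, Complex.norm_conj] at h2
    nlinarith [norm_nonneg a, norm_nonneg b]
  unfold hrho
  rw [norm_div]
  exact div_le_div_of_nonneg_left (norm_nonneg _) (by linarith) h1

lemma abs_sub_le_two_hrho {a b : ℂ} (ha : (norm : ℂ → ℝ) a < 1) (hb : (norm : ℂ → ℝ) b < 1) :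
    (norm : ℂ → ℝ) (a - b) ≤ 2 * hrho a b := by
  have hd : (norm : ℂ → ℝ) (1 - (starRingEnd ℂ) b * a) ≤ 2 := by
    have h2 := norm_sub_le (1 : ℂ) ((starRingEnd ℂ) b * a)
    simp only [norm_one, norm_mul, Complex.norm_conj] at h2
    nlinarith [norm_nonneg a, norm_nonneg b]
  have hdpos : 0 < (norm : ℂ → ℝ) (1 - (starRingEnd ℂ) b * a) :=
    norm_pos_iff.mpr (oneSubMul_ne ha hb)
  have h3 : hrho a b = (norm : ℂ → ℝ) (a - b) / (norm : ℂ → ℝ) (1 - (starRingEnd ℂ) b * a) := by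
    rw [hrho, norm_div]
  rw [h3, mul_div_assoc', le_div_iff₀ hdpos]
  nlinarith [norm_nonneg (a - b)]

lemma le_log_ratio {x : ℝ} (h0 : 0 ≤ x) (h1 : x < 1) : x ≤ Real.log ((1+x)/(1-x)) := by
  have hpos : 0 < (1-x)/(1+x) := div_pos (by linarith) (by linarith)
  have hlog := Real.log_le_sub_one_of_pos hpos
  have hinv : Real.log ((1-x)/(1+x)) = - Real.log ((1+x)/(1-x)) := by
    rw [← Real.log_inv]
    congr 1
    rw [inv_div]
  have hq : (1-x)/(1+x) - 1 ≤ -x := by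
    rw [div_sub_one (by positivity), div_le_iff₀ (by positivity : (0:ℝ) < 1+x)]
    nlinarith
  rw [hinv] at hlog
  linarith

lemma log_ratio_le {x : ℝ} (h0 : 0 ≤ x) (h1 : x < 1) :
    Real.log ((1+x)/(1-x)) ≤ 2*x/(1-x) := by
  have hlog := Real.log_le_sub_one_of_pos (div_pos (show (0:ℝ) < 1+x by linarith) (show (0:ℝ) < 1-x by linarith))
  have hx : (1:ℝ) - x ≠ 0 := by linarith
  have hq : (1+x)/(1-x) - 1 = 2*x/(1-x) := by
    field_simp
    ring
  linarith

lemma lt_of_log_ratio_lt {x η : ℝ} (h0 : 0 ≤ x) (h1 : x < 1)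
    (h : Real.log ((1+x)/(1-x)) < η) : x < (Real.exp η - 1)/(Real.exp η + 1) := by
  have hpos : 0 < (1+x)/(1-x) := div_pos (by linarith) (by linarith)
  have h2 : (1+x)/(1-x) < Real.exp η := by
    rw [← Real.exp_log hpos]
    exact Real.exp_lt_exp.mpr h
  have he : 0 < Real.exp η := Real.exp_pos η
  rw [div_lt_iff₀ (by linarith : (0:ℝ) < 1-x)] at h2
  rw [lt_div_iff₀ (by linarith : (0:ℝ) < Real.exp η + 1)]
  nlinarith

set_option maxHeartbeats 2000000 in
/-- If n points lie in a small hyperbolic disc and the hyperbolic difference quotients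
of each column are ε-close to the top entry of the column, then any two difference
quotients of the same column are Cε-close relative to the hyperbolic distance of the
corresponding points. -/
theorem hdq_column_compat (n : ℕ) (hn : 3 ≤ n) (η : ℝ) (hη : 0 < η) :
    ∃ C > (0 : ℝ), ∃ ε0 > (0 : ℝ), ∀ (z w : ℕ → ℂ) (ε : ℝ),
      (∀ i, i < n → z i ∈ unitD) →
      (∀ i j, i < n → j < n → i ≠ j → z i ≠ z j) →
      (∃ c ∈ unitD, ∀ i, i < n → z i ∈ hdisc c η) →
      (∀ j, j < n → w j ∈ unitD) →
      0 < ε → ε ≤ ε0 →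
      (∀ k j, 1 ≤ k → k ≤ n - 2 → k + 1 ≤ j → j ≤ n - 1 →
        hdq z w k j ∈ unitD ∧ hdq z w k k ∈ unitD ∧
        hbeta (hdq z w k j) (hdq z w k k) ≤ ε * hbeta (z j) (z k)) →
      ∀ k i j, 1 ≤ k → k ≤ n - 2 → k ≤ i → i < j → j ≤ n - 1 →
        hbeta (hdq z w k i) (hdq z w k j) ≤ C * ε * hbeta (z i) (z j) := by
  set t : ℝ := (Real.exp η - 1)/(Real.exp η + 1) with ht
  have hexp : 1 < Real.exp η := by
    rw [← Real.exp_zero]; exact Real.exp_lt_exp.mpr hη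
  have ht0 : 0 < t := div_pos (by linarith) (by linarith)
  have ht1 : t < 1 := by
    rw [ht, div_lt_one (by linarith)]; linarith
  set R : ℝ := 2*t/(1+t^2) with hR
  have hR0 : 0 < R := div_pos (by linarith) (by positivity)
  have hR1 : R < 1 := by
    rw [hR, div_lt_one (by positivity)]; nlinarith [sq_nonneg (1-t)]
  set K : ℝ := 8/(1-R) with hK
  have hK0 : 0 < K := div_pos (by norm_num) (by linarith)
  set A : ℝ := K * 5^n with hA
  have h5n : (1:ℝ) ≤ 5^n := one_le_pow₀ (by norm_num : (1:ℝ) ≤ 5)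
  have hA0 : 0 < A := by rw [hA]; positivity
  have hK4 : K/4 = 2/(1-R) := by rw [hK]; ring
  clear_value t R K A
  refine ⟨4*A, by linarith, 1/(2*A), by positivity, ?_⟩
  intro z w ε hzD hzne hdsc hwD hε0 hεle H
  obtain ⟨c, hcD, hc⟩ := hdsc
  have hcA : (norm : ℂ → ℝ) c < 1 := hcD
  -- bound on pseudohyperbolic distances between the points
  have zbound : ∀ i j, i < n → j < n → hrho (z i) (z j) ≤ R := by
    intro i j hi hj
    have h1 := hc i hi
    have h2 := hc j hj
    have hi1 : (norm : ℂ → ℝ) (z i) < 1 := h1.1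
    have hj1 : (norm : ℂ → ℝ) (z j) < 1 := h2.1
    have hzc1 : hrho (z i) c < t := by
      have := lt_of_log_ratio_lt (hrho_nonneg (z i) c) (hrho_lt_one hi1 hcA) h1.2
      rwa [← ht] at this
    have hzc2 : hrho (z j) c < t := by
      have := lt_of_log_ratio_lt (hrho_nonneg (z j) c) (hrho_lt_one hj1 hcA) h2.2
      rwa [← ht] at this
    have hiso := hrho_mstar_mstar hcA hi1 hj1
    have hma : (norm : ℂ → ℝ) (mstar (z i) c) < 1 := by
      rw [abs_mstar]; exact hrho_lt_one hi1 hcA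
    have hmb : (norm : ℂ → ℝ) (mstar (z j) c) < 1 := by
      rw [abs_mstar]; exact hrho_lt_one hj1 hcA
    have h3 := hrho_le_add hma hmb
    rw [abs_mstar, abs_mstar, hiso] at h3
    set a := hrho (z i) c
    set b := hrho (z j) c
    have ha0 : 0 ≤ a := hrho_nonneg _ _
    have hb0 : 0 ≤ b := hrho_nonneg _ _
    have h4 : (a+b)/(1+a*b) ≤ R := by
      rw [hR, div_le_div_iff₀ (by nlinarith) (by positivity)]
      nlinarith [mul_nonneg (by linarith : (0:ℝ) ≤ t - a) (by nlinarith : (0:ℝ) ≤ 1 - b*t),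
        mul_nonneg (by linarith : (0:ℝ) ≤ t - b) (by nlinarith : (0:ℝ) ≤ 1 - a*t)]
    linarith
  have colbound : ∀ k j, 1 ≤ k → k ≤ n - 2 → k + 1 ≤ j → j ≤ n - 1 →
      hrho (hdq z w k j) (hdq z w k k) ≤ K/4 * ε * hrho (z j) (z k) := by
    intro k j hk1 hk2 hj1 hj2
    obtain ⟨hDj, hDk, hβ⟩ := H k j hk1 hk2 hj1 hj2
    have hjn : j < n := by omega
    have hkn : k < n := by omega
    unfold hbeta at hβ
    set x := hrho (hdq z w k j) (hdq z w k k) with hx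
    set y := hrho (z j) (z k) with hy
    have hx1 : x < 1 := hrho_lt_one hDj hDk
    have hx0 : 0 ≤ x := hrho_nonneg _ _
    have hy1 : y < 1 := hrho_lt_one (hzD j hjn) (hzD k hkn)
    have hy0 : 0 ≤ y := hrho_nonneg _ _
    have hyR : y ≤ R := zbound j k hjn hkn
    have h1 : x ≤ Real.log ((1+x)/(1-x)) := le_log_ratio hx0 hx1
    have h2 : Real.log ((1+y)/(1-y)) ≤ 2*y/(1-y) := log_ratio_le hy0 hy1
    have h3 : 2*y/(1-y) ≤ 2*y/(1-R) := div_le_div_of_nonneg_left (by linarith) (by linarith) (by linarith)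
    have h4 : ε * Real.log ((1+y)/(1-y)) ≤ ε * (2*y/(1-R)) := by
      apply mul_le_mul_of_nonneg_left _ hε0.le
      linarith
    have h5 : ε * (2*y/(1-R)) = K/4 * ε * y := by
      rw [hK4]; ring
    linarith
  have εsmall : K/4 * ε ≤ 1/8 := by
    have h1 : K * ε ≤ K * (1/(2*(K*5^n))) := by
      apply mul_le_mul_of_nonneg_left _ hK0.le
      rw [← hA]
      exact hεle
    have h2 : K * (1/(2*(K*5^n))) = 1/(2*5^n) := by
      field_simp
    have h3 : (1:ℝ)/(2*5^n) ≤ 1/2 := by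
      rw [div_le_div_iff₀ (by positivity) (by norm_num)]
      linarith
    linarith
  have key : ∀ d k, 1 ≤ k → k + d = n - 2 → ∀ i j, k ≤ i → i < j → j ≤ n - 1 →
      hrho (hdq z w k i) (hdq z w k j) ≤ K * 5^(d+1) * ε * hrho (z i) (z j) := by
    intro d
    induction d with
    | zero =>
      intro k hk1 hk2 i j hi hij hj
      have hik : i = k := by omega
      subst hik
      have h := colbound i j hk1 (by omega) (by omega) hj
      rw [hrho_comm (hdq z w i j) (hdq z w i i), hrho_comm (z j) (z i)] at h
      have h0 : 0 ≤ hrho (z i) (z j) := hrho_nonneg _ _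
      have h51 : (5:ℝ)^(0+1) = 5 := by norm_num
      rw [h51]
      have hm : 0 ≤ K * ε * hrho (z i) (z j) := mul_nonneg (mul_nonneg hK0.le hε0.le) h0
      linarith only [h, hm]
    | succ d ih =>
      intro k hk1 hk2 i j hi hij hj
      have hρij0 : 0 ≤ hrho (z i) (z j) := hrho_nonneg _ _
      rcases eq_or_lt_of_le hi with he | hlt
      · subst he
        have h := colbound k j hk1 (by omega) (by omega) hj
        rw [hrho_comm (hdq z w k j) (hdq z w k k), hrho_comm (z j) (z k)] at h
        have h5p : (1:ℝ) ≤ 5^(d+1+1) := one_le_pow₀ (by norm_num)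
        have hm : 0 ≤ K * ε * hrho (z k) (z j) * (5^(d+1+1) - 1) :=
          mul_nonneg (mul_nonneg (mul_nonneg hK0.le hε0.le) (hrho_nonneg _ _)) (by linarith)
        have hm2 : 0 ≤ K * ε * hrho (z k) (z j) :=
          mul_nonneg (mul_nonneg hK0.le hε0.le) (hrho_nonneg _ _)
        linarith only [h, hm, hm2]
      · -- k < i < j
        have hkn2 : k ≤ n - 2 := by omega
        have hin : i < n := by omega
        have hjn : j < n := by omega
        have hkn : k < n := by omega
        obtain ⟨hDi, hB, _⟩ := H k i hk1 hkn2 (by omega) (by omega)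
        obtain ⟨hDj, _, _⟩ := H k j hk1 hkn2 (by omega) (by omega)
        have hDiA : (norm : ℂ → ℝ) (hdq z w k i) < 1 := hDi
        have hDjA : (norm : ℂ → ℝ) (hdq z w k j) < 1 := hDj
        have hBA : (norm : ℂ → ℝ) (hdq z w k k) < 1 := hB
        -- the numerators and denominators
        have hui : hdq z w (k+1) i = mstar (hdq z w k i) (hdq z w k k) / mstar (z i) (z k) := rfl
        have huj : hdq z w (k+1) j = mstar (hdq z w k j) (hdq z w k k) / mstar (z j) (z k) := rfl
        have hmine : mstar (z i) (z k) ≠ 0 := by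
          apply div_ne_zero
          · exact sub_ne_zero.mpr (hzne k i hkn hin (by omega))
          · exact oneSubMul_ne (hzD i hin) (hzD k hkn)
        have hmjne : mstar (z j) (z k) ≠ 0 := by
          apply div_ne_zero
          · exact sub_ne_zero.mpr (hzne k j hkn hjn (by omega))
          · exact oneSubMul_ne (hzD j hjn) (hzD k hkn)
        have hmi1 : (norm : ℂ → ℝ) (mstar (z i) (z k)) ≤ 1 := by
          rw [abs_mstar]
          exact (hrho_lt_one (hzD i hin) (hzD k hkn)).le
        have hmj1 : (norm : ℂ → ℝ) (mstar (z j) (z k)) ≤ 1 := by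
          rw [abs_mstar]
          exact (hrho_lt_one (hzD j hjn) (hzD k hkn)).le
        -- bounds on the column entries
        have hbi : (norm : ℂ → ℝ) (mstar (hdq z w k i) (hdq z w k k))
            ≤ K/4 * ε * hrho (z i) (z k) := by
          rw [abs_mstar]
          exact colbound k i hk1 hkn2 (by omega) (by omega)
        have hbj : (norm : ℂ → ℝ) (mstar (hdq z w k j) (hdq z w k k))
            ≤ K/4 * ε * hrho (z j) (z k) := by
          rw [abs_mstar]
          exact colbound k j hk1 hkn2 (by omega) (by omega)
        have hρzi1 : hrho (z i) (z k) ≤ 1 := (hrho_lt_one (hzD i hin) (hzD k hkn)).le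
        have hρzj1 : hrho (z j) (z k) ≤ 1 := (hrho_lt_one (hzD j hjn) (hzD k hkn)).le
        have hρzi0 : 0 < hrho (z i) (z k) :=
          hrho_pos (hzne i k hin hkn (by omega)) (hzD i hin) (hzD k hkn)
        have hρzj0 : 0 < hrho (z j) (z k) :=
          hrho_pos (hzne j k hjn hkn (by omega)) (hzD j hjn) (hzD k hkn)
        have hui8 : (norm : ℂ → ℝ) (mstar (hdq z w k i) (hdq z w k k)) ≤ 1/8 := by
          have h1 : K/4*ε*hrho (z i) (z k) ≤ 1/8 * hrho (z i) (z k) :=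
            mul_le_mul_of_nonneg_right εsmall (hrho_nonneg _ _)
          have h2 : hrho (z i) (z k) ≤ 1 := hρzi1
          linarith only [hbi, h1, h2, hrho_nonneg (z i) (z k)]
        have huj8 : (norm : ℂ → ℝ) (mstar (hdq z w k j) (hdq z w k k)) ≤ 1/8 := by
          have h1 : K/4*ε*hrho (z j) (z k) ≤ 1/8 * hrho (z j) (z k) :=
            mul_le_mul_of_nonneg_right εsmall (hrho_nonneg _ _)
          have h2 : hrho (z j) (z k) ≤ 1 := hρzj1
          linarith only [hbj, h1, h2, hrho_nonneg (z j) (z k)]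
        -- |D_i| bounds at level k+1
        have hDi8 : (norm : ℂ → ℝ) (hdq z w (k+1) i) ≤ 1/8 := by
          rw [hui, norm_div, abs_mstar (z i) (z k), div_le_iff₀ hρzi0]
          calc (norm : ℂ → ℝ) (mstar (hdq z w k i) (hdq z w k k))
              ≤ K/4 * ε * hrho (z i) (z k) := hbi
            _ ≤ 1/8 * hrho (z i) (z k) := by
                apply mul_le_mul_of_nonneg_right εsmall (hrho_nonneg _ _)
        have hDj8 : (norm : ℂ → ℝ) (hdq z w (k+1) j) ≤ K/4 * ε := by
          rw [huj, norm_div, abs_mstar (z j) (z k), div_le_iff₀ hρzj0]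
          exact hbj
        have hDj8' : (norm : ℂ → ℝ) (hdq z w (k+1) j) ≤ 1/8 := le_trans hDj8 εsmall
        have hIH := ih (k+1) (by omega) (by omega) i j (by omega) hij hj
        have hiso : hrho (mstar (hdq z w k i) (hdq z w k k)) (mstar (hdq z w k j) (hdq z w k k))
            = hrho (hdq z w k i) (hdq z w k j) := hrho_mstar_mstar hBA hDiA hDjA
        set ui := mstar (hdq z w k i) (hdq z w k k) with hui'
        set uj := mstar (hdq z w k j) (hdq z w k k) with huj'
        have hui0 : 0 ≤ (norm : ℂ → ℝ) ui := norm_nonneg _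
        have huj0 : 0 ≤ (norm : ℂ → ℝ) uj := norm_nonneg _
        have hprodq : (norm : ℂ → ℝ) ui * (norm : ℂ → ℝ) uj ≤ 1/64 := by
          have := mul_le_mul hui8 huj8 huj0 (by norm_num : (0:ℝ) ≤ 1/8)
          linarith only [this]
        have hprod : (norm : ℂ → ℝ) ui * (norm : ℂ → ℝ) uj < 1 := by linarith only [hprodq]
        have h6 : hrho ui uj ≤ (norm : ℂ → ℝ) (ui - uj) / (1 - (norm : ℂ → ℝ) ui * (norm : ℂ → ℝ) uj) :=
          hrho_le_sub_div hprod
        have h7 : (norm : ℂ → ℝ) (ui - uj) / (1 - (norm : ℂ → ℝ) ui * (norm : ℂ → ℝ) uj)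
            ≤ 2 * (norm : ℂ → ℝ) (ui - uj) := by
          have hp : (1:ℝ)/2 ≤ 1 - (norm : ℂ → ℝ) ui * (norm : ℂ → ℝ) uj := by linarith only [hprodq]
          calc (norm : ℂ → ℝ) (ui - uj) / (1 - (norm : ℂ → ℝ) ui * (norm : ℂ → ℝ) uj)
              ≤ (norm : ℂ → ℝ) (ui - uj) / (1/2) :=
                div_le_div_of_nonneg_left (norm_nonneg _) (by norm_num) hp
            _ = 2 * (norm : ℂ → ℝ) (ui - uj) := by ring
        have hdecomp : ui - uj = (hdq z w (k+1) i - hdq z w (k+1) j) * mstar (z i) (z k)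
            + hdq z w (k+1) j * (mstar (z i) (z k) - mstar (z j) (z k)) := by
          rw [hui, huj]
          field_simp
          ring
        have habs : (norm : ℂ → ℝ) (ui - uj)
            ≤ (norm : ℂ → ℝ) (hdq z w (k+1) i - hdq z w (k+1) j) * (norm : ℂ → ℝ) (mstar (z i) (z k))
              + (norm : ℂ → ℝ) (hdq z w (k+1) j)
                * (norm : ℂ → ℝ) (mstar (z i) (z k) - mstar (z j) (z k)) := by
          rw [hdecomp]
          calc (norm : ℂ → ℝ) _ ≤ (norm : ℂ → ℝ) ((hdq z w (k+1) i - hdq z w (k+1) j) * mstar (z i) (z k))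
                + (norm : ℂ → ℝ) (hdq z w (k+1) j * (mstar (z i) (z k) - mstar (z j) (z k))) :=
              norm_add_le _ _
            _ = _ := by rw [norm_mul, norm_mul]
        have hDD : (norm : ℂ → ℝ) (hdq z w (k+1) i - hdq z w (k+1) j)
            ≤ 2 * hrho (hdq z w (k+1) i) (hdq z w (k+1) j) :=
          abs_sub_le_two_hrho (lt_of_le_of_lt hDi8 (by norm_num))
            (lt_of_le_of_lt hDj8' (by norm_num))
        have hmm : (norm : ℂ → ℝ) (mstar (z i) (z k) - mstar (z j) (z k))
            ≤ 2 * hrho (z i) (z j) := by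
          have hmma : (norm : ℂ → ℝ) (mstar (z i) (z k)) < 1 := by
            rw [abs_mstar]; exact hrho_lt_one (hzD i hin) (hzD k hkn)
          have hmmb : (norm : ℂ → ℝ) (mstar (z j) (z k)) < 1 := by
            rw [abs_mstar]; exact hrho_lt_one (hzD j hjn) (hzD k hkn)
          have h := abs_sub_le_two_hrho hmma hmmb
          rwa [hrho_mstar_mstar (hzD k hkn) (hzD i hin) (hzD j hjn)] at h
        -- assemble
        set q := hrho (z i) (z j) with hq
        have hq0 : 0 ≤ q := hρij0
        have hp1 : (1:ℝ) ≤ 5^(d+1) := one_le_pow₀ (by norm_num)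
        have hABS0 : 0 ≤ (norm : ℂ → ℝ) (hdq z w (k+1) i - hdq z w (k+1) j) := norm_nonneg _
        have hABS1 : 0 ≤ (norm : ℂ → ℝ) (mstar (z i) (z k) - mstar (z j) (z k)) := norm_nonneg _
        have hDj0 : 0 ≤ (norm : ℂ → ℝ) (hdq z w (k+1) j) := norm_nonneg _
        have hterm1 : (norm : ℂ → ℝ) (hdq z w (k+1) i - hdq z w (k+1) j) * (norm : ℂ → ℝ) (mstar (z i) (z k))
            ≤ 2 * (K * 5^(d+1) * ε * q) := by
          calc (norm : ℂ → ℝ) (hdq z w (k+1) i - hdq z w (k+1) j) * (norm : ℂ → ℝ) (mstar (z i) (z k))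
              ≤ (norm : ℂ → ℝ) (hdq z w (k+1) i - hdq z w (k+1) j) * 1 :=
              mul_le_mul_of_nonneg_left hmi1 hABS0
            _ = (norm : ℂ → ℝ) (hdq z w (k+1) i - hdq z w (k+1) j) := mul_one _
            _ ≤ 2 * hrho (hdq z w (k+1) i) (hdq z w (k+1) j) := hDD
            _ ≤ 2 * (K * 5^(d+1) * ε * q) := by linarith
        have hterm2 : (norm : ℂ → ℝ) (hdq z w (k+1) j)
              * (norm : ℂ → ℝ) (mstar (z i) (z k) - mstar (z j) (z k))
            ≤ K/4 * ε * (2 * q) := by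
          exact mul_le_mul hDj8 hmm hABS1
            (mul_nonneg (by linarith only [hK0] : (0:ℝ) ≤ K/4) hε0.le)
        have hfin : hrho (hdq z w k i) (hdq z w k j) ≤ 4 * (K * 5^(d+1) * ε * q) + K * ε * q := by
          rw [← hiso]
          calc hrho ui uj ≤ 2 * (norm : ℂ → ℝ) (ui - uj) := le_trans h6 h7
            _ ≤ 2 * ((norm : ℂ → ℝ) (hdq z w (k+1) i - hdq z w (k+1) j) * (norm : ℂ → ℝ) (mstar (z i) (z k))
                + (norm : ℂ → ℝ) (hdq z w (k+1) j)
                  * (norm : ℂ → ℝ) (mstar (z i) (z k) - mstar (z j) (z k))) := by linarith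
            _ ≤ 2 * (2 * (K * 5^(d+1) * ε * q) + K/4 * ε * (2 * q)) := by linarith
            _ = 4 * (K * 5^(d+1) * ε * q) + K * ε * q := by ring
        have hpow : (5:ℝ)^(d+1+1) = 5^(d+1) * 5 := pow_succ 5 (d+1)
        rw [hpow]
        have hm : 0 ≤ K * ε * q * (5^(d+1) - 1) :=
          mul_nonneg (mul_nonneg (mul_nonneg hK0.le hε0.le) hq0) (by linarith)
        linarith only [hfin, hm]
  -- final assembly
  intro k i j hk1 hk2 hki hij hj
  have hin : i < n := by omega
  have hjn : j < n := by omega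
  have h := key (n-2-k) k hk1 (by omega) i j hki hij hj
  unfold hbeta
  set q := hrho (z i) (z j) with hq
  set x := hrho (hdq z w k i) (hdq z w k j) with hx
  have hq0 : 0 ≤ q := hrho_nonneg _ _
  have hq1 : q < 1 := hrho_lt_one (hzD i hin) (hzD j hjn)
  have hx0 : 0 ≤ x := hrho_nonneg _ _
  have hqR : q ≤ R := zbound i j hin hjn
  have hpow : K * 5^(n-2-k+1) ≤ A := by
    rw [hA]
    apply mul_le_mul_of_nonneg_left _ hK0.le
    apply pow_le_pow_right₀ (by norm_num) (by omega)
  have hxA : x ≤ A * ε * q := by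
    have h2 := mul_le_mul_of_nonneg_right hpow (mul_nonneg hε0.le hq0)
    have h3 : K * 5^(n-2-k+1) * ε * q = K * 5^(n-2-k+1) * (ε * q) := by ring
    have h4 : A * (ε * q) = A * ε * q := by ring
    linarith only [h, h2, h3, h4]
  have hAε : A * ε ≤ 1/2 := by
    calc A * ε ≤ A * (1/(2*A)) := mul_le_mul_of_nonneg_left hεle hA0.le
      _ = 1/2 := by
        field_simp
  have hx2 : x ≤ 1/2 := by
    have hq1' : q ≤ 1 := by linarith only [hqR, hR1]
    have h5 : A * ε * q ≤ A * ε * 1 :=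
      mul_le_mul_of_nonneg_left hq1' (mul_nonneg hA0.le hε0.le)
    linarith only [hxA, h5, hAε]
  have h1 : Real.log ((1+x)/(1-x)) ≤ 2*x/(1-x) := log_ratio_le hx0 (by linarith)
  have h2 : 2*x/(1-x) ≤ 4*x := by
    rw [div_le_iff₀ (by linarith)]
    have hm : 0 ≤ x * (1 - 2*x) := mul_nonneg hx0 (by linarith)
    nlinarith [hm]
  have h3 : q ≤ Real.log ((1+q)/(1-q)) := le_log_ratio hq0 hq1
  have h4 : 4*A*ε*q ≤ 4*A*ε*Real.log ((1+q)/(1-q)) := by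
    exact mul_le_mul_of_nonneg_left h3
      (mul_nonneg (mul_nonneg (by norm_num : (0:ℝ) ≤ 4) hA0.le) hε0.le)
  have h5 : 4 * (A*ε*q) = 4*A*ε*q := by ring
  linarith only [h1, h2, hxA, h4, h5]
end
end

section
/- Let n ≥ 2, let Z = {z_j} be an interpolating sequence of order n−1 for U with interpolation constant ε, and let τ be an automorphism of D. Then τ(Z) = {τ(z_j)} is also an interpolating sequence of order n−1 for U with the same interpolation constant ε. -/
open Complex Filter Set

noncomputable section

/-- Selection of n terms of a sequence according to an injection σ : Fin n → ℕ. -/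
def seqSel {n : ℕ} (Z : ℕ → ℂ) (σ : Fin n → ℕ) : ℕ → ℂ :=
  fun i => if h : i < n then Z (σ ⟨i, h⟩) else 0

/-- The ε-compatibility condition of order n-1: for every choice of n points of Z
(in any order) and the corresponding values of W, all hyperbolic difference quotients
Δ^k_i (0 ≤ k ≤ n-2, k+1 ≤ i ≤ n, 1-based) lie in the disc and satisfy
β(Δ^k_i, Δ^k_j) ≤ ε β(z_i, z_j). -/
def CompatCond (n : ℕ) (ε : ℝ) (Z W : ℕ → ℂ) : Prop :=
  ∀ σ : Fin n → ℕ, Function.Injective σ →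
    (∀ k i : ℕ, k ≤ n - 2 → k ≤ i → i ≤ n - 1 →
      hdq (seqSel Z σ) (seqSel W σ) k i ∈ unitD) ∧
    (∀ k i j : ℕ, k ≤ n - 2 → k ≤ i → i ≤ n - 1 → k ≤ j → j ≤ n - 1 → i ≠ j →
      hbeta (hdq (seqSel Z σ) (seqSel W σ) k i) (hdq (seqSel Z σ) (seqSel W σ) k j)
        ≤ ε * hbeta (seqSel Z σ i) (seqSel Z σ j))

/-- Z is an interpolating sequence of order `ord` for U with interpolation constant ε. -/
def IsInterpolatingOfOrderWith (ord : ℕ) (Z : ℕ → ℂ) (ε : ℝ) : Prop :=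
  ∀ W : ℕ → ℂ, (∀ j, W j ∈ unitD) → CompatCond (ord + 1) ε Z W →
    ∃ f : ℂ → ℂ, DifferentiableOn ℂ f unitD ∧ Set.MapsTo f unitD unitD ∧
      ∀ j, f (Z j) = W j

/-- Z is an interpolating sequence of order `ord` for U. -/
def IsInterpolatingOfOrder (ord : ℕ) (Z : ℕ → ℂ) : Prop :=
  ∃ ε > 0, IsInterpolatingOfOrderWith ord Z ε

/-- An automorphism of the unit disc: τ(z) = λ (z - z0)/(1 - conj(z0) z), |λ| = 1, z0 ∈ D. -/
def IsDiscAut (τ : ℂ → ℂ) : Prop :=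
  ∃ lam z0 : ℂ, ‖lam‖ = 1 ∧ z0 ∈ unitD ∧
    ∀ z : ℂ, τ z = lam * ((z - z0) / (1 - (starRingEnd ℂ) z0 * z))



lemma one_sub_conj_ne' (a b : ℂ) (ha : ‖a‖ < 1) (hb : ‖b‖ < 1) :
    1 - (starRingEnd ℂ) b * a ≠ 0 := by
  intro h
  have h1 : (starRingEnd ℂ) b * a = 1 := by linear_combination -h
  have : ‖(starRingEnd ℂ) b * a‖ < 1 := by
    rw [norm_mul, Complex.norm_conj]
    nlinarith [norm_nonneg a, norm_nonneg b]
  rw [h1] at this; simp at this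

lemma normSq_key' (c z : ℂ) :
    Complex.normSq (1 - (starRingEnd ℂ) c * z) - Complex.normSq (z - c)
      = (1 - Complex.normSq c) * (1 - Complex.normSq z) := by
  have h : ((Complex.normSq (1 - (starRingEnd ℂ) c * z) : ℂ)) - Complex.normSq (z - c)
      = ((1 : ℂ) - Complex.normSq c) * (1 - Complex.normSq z) := by
    simp only [← Complex.mul_conj, map_sub, map_mul, map_one, Complex.conj_conj]
    ring
  exact_mod_cast h

lemma abs_sub_lt' (c z : ℂ) (hc : ‖c‖ < 1) (hz : ‖z‖ < 1) :
    ‖z - c‖ < ‖1 - (starRingEnd ℂ) c * z‖ := by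
  have h := normSq_key' c z
  have hc' : Complex.normSq c < 1 := by
    rw [Complex.normSq_eq_norm_sq]; nlinarith [norm_nonneg c]
  have hz' : Complex.normSq z < 1 := by
    rw [Complex.normSq_eq_norm_sq]; nlinarith [norm_nonneg z]
  have : Complex.normSq (z - c) < Complex.normSq (1 - (starRingEnd ℂ) c * z) := by nlinarith
  rw [Complex.norm_def, Complex.norm_def]
  exact Real.sqrt_lt_sqrt (Complex.normSq_nonneg _) this

lemma aut_maps' (lam c z : ℂ) (hl : ‖lam‖ = 1) (hc : ‖c‖ < 1)
    (hz : ‖z‖ < 1) :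
    ‖lam * ((z - c) / (1 - (starRingEnd ℂ) c * z))‖ < 1 := by
  rw [norm_mul, norm_div, hl, one_mul]
  have hne := one_sub_conj_ne' z c hz hc
  rw [div_lt_one (norm_pos_iff.mpr hne)]
  exact abs_sub_lt' c z hc hz

lemma mstar_unimod' (u a b : ℂ) (hu : (starRingEnd ℂ) u * u = 1) :
    mstar (u * a) (u * b) = u * mstar a b := by
  unfold mstar
  have h1 : 1 - (starRingEnd ℂ) (u * b) * (u * a) = 1 - (starRingEnd ℂ) b * a := by
    rw [map_mul]; linear_combination (-((starRingEnd ℂ) b * a)) * hu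
  rw [h1, ← mul_div_assoc, mul_sub]

lemma mstar_aut' (lam c a b : ℂ) (hl : ‖lam‖ = 1) (hc : ‖c‖ < 1)
    (ha : ‖a‖ < 1) (hb : ‖b‖ < 1) :
    mstar (lam * ((a - c) / (1 - (starRingEnd ℂ) c * a)))
        (lam * ((b - c) / (1 - (starRingEnd ℂ) c * b)))
      = lam * ((starRingEnd ℂ) (1 - (starRingEnd ℂ) c * b) / (1 - (starRingEnd ℂ) c * b))
          * mstar a b := by
  have hl1 : (starRingEnd ℂ) lam * lam = 1 := by
    rw [mul_comm, Complex.mul_conj]; norm_cast; rw [Complex.normSq_eq_norm_sq, hl]; norm_num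
  have hlam : lam ≠ 0 := by intro h; rw [h] at hl; simp at hl
  have hli : (starRingEnd ℂ) lam = lam⁻¹ := eq_inv_of_mul_eq_one_left hl1
  have hda : 1 - (starRingEnd ℂ) c * a ≠ 0 := one_sub_conj_ne' a c ha hc
  have hdb : 1 - (starRingEnd ℂ) c * b ≠ 0 := one_sub_conj_ne' b c hb hc
  have hda' : 1 - c * (starRingEnd ℂ) a ≠ 0 := by
    intro h; apply hda; have := congrArg (starRingEnd ℂ) h; simpa [mul_comm] using this
  have hdb' : 1 - c * (starRingEnd ℂ) b ≠ 0 := by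
    intro h; apply hdb; have := congrArg (starRingEnd ℂ) h; simpa [mul_comm] using this
  have hab : 1 - (starRingEnd ℂ) b * a ≠ 0 := one_sub_conj_ne' a b ha hb
  have hbig : 1 - (starRingEnd ℂ) (lam * ((b - c) / (1 - (starRingEnd ℂ) c * b)))
      * (lam * ((a - c) / (1 - (starRingEnd ℂ) c * a))) ≠ 0 :=
    one_sub_conj_ne' _ _ (aut_maps' lam c a hl hc ha) (aut_maps' lam c b hl hc hb)
  have hR : lam * ((starRingEnd ℂ) (1 - (starRingEnd ℂ) c * b) / (1 - (starRingEnd ℂ) c * b))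
          * mstar a b
      = (lam * (starRingEnd ℂ) (1 - (starRingEnd ℂ) c * b) * (b - a))
          / ((1 - (starRingEnd ℂ) c * b) * (1 - (starRingEnd ℂ) b * a)) := by
    unfold mstar
    rw [mul_assoc, div_mul_div_comm, mul_div_assoc', ← mul_assoc]
  rw [hR]
  unfold mstar
  rw [div_eq_div_iff hbig (mul_ne_zero hdb hab)]
  simp only [map_mul, map_div₀, map_sub, map_one, Complex.conj_conj, hli]
  have hdb'' : 1 - b * (starRingEnd ℂ) c ≠ 0 := by rw [mul_comm]; exact hdb
  have hda'' : 1 - a * (starRingEnd ℂ) c ≠ 0 := by rw [mul_comm]; exact hda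
  field_simp
  ring

lemma hrho_unimod' (u a b : ℂ) (hu : (starRingEnd ℂ) u * u = 1) :
    hrho (u * a) (u * b) = hrho a b := by
  unfold hrho
  have h1 : u * a - u * b = u * (a - b) := by ring
  have h2 : 1 - (starRingEnd ℂ) (u * b) * (u * a) = 1 - (starRingEnd ℂ) b * a := by
    rw [map_mul]; linear_combination (-((starRingEnd ℂ) b * a)) * hu
  have hu1 : ‖u‖ = 1 := by
    have := congrArg (‖·‖) hu
    rw [norm_mul, Complex.norm_conj, norm_one] at this
    nlinarith [norm_nonneg u]
  rw [h1, h2, mul_div_assoc, norm_mul, hu1, one_mul]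

lemma hbeta_unimod' (u a b : ℂ) (hu : (starRingEnd ℂ) u * u = 1) :
    hbeta (u * a) (u * b) = hbeta a b := by
  unfold hbeta; rw [hrho_unimod' u a b hu]

lemma unimod_of_abs' {u : ℂ} (h : ‖u‖ = 1) : (starRingEnd ℂ) u * u = 1 := by
  rw [mul_comm, Complex.mul_conj]; norm_cast; rw [Complex.normSq_eq_norm_sq, h]; norm_num

lemma hrho_eq_abs_mstar (z w : ℂ) : hrho z w = ‖mstar w z‖ := by
  unfold hrho mstar
  rw [norm_div, norm_div]
  congr 1
  have h : (1 - (starRingEnd ℂ) z * w) = (starRingEnd ℂ) (1 - (starRingEnd ℂ) w * z) := by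
    rw [map_sub, map_one, map_mul, Complex.conj_conj]; ring
  rw [h, Complex.norm_conj]

lemma hrho_aut' (lam c a b : ℂ) (hl : ‖lam‖ = 1) (hc : ‖c‖ < 1)
    (ha : ‖a‖ < 1) (hb : ‖b‖ < 1) :
    hrho (lam * ((a - c) / (1 - (starRingEnd ℂ) c * a)))
        (lam * ((b - c) / (1 - (starRingEnd ℂ) c * b))) = hrho a b := by
  rw [hrho_eq_abs_mstar, hrho_eq_abs_mstar]
  rw [mstar_aut' lam c b a hl hc hb ha]
  have hda : 1 - (starRingEnd ℂ) c * a ≠ 0 := one_sub_conj_ne' a c ha hc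
  rw [norm_mul, norm_mul, hl, norm_div, Complex.norm_conj,
    div_self (norm_ne_zero_iff.mpr hda), one_mul, one_mul]

lemma hbeta_aut' (lam c a b : ℂ) (hl : ‖lam‖ = 1) (hc : ‖c‖ < 1)
    (ha : ‖a‖ < 1) (hb : ‖b‖ < 1) :
    hbeta (lam * ((a - c) / (1 - (starRingEnd ℂ) c * a)))
        (lam * ((b - c) / (1 - (starRingEnd ℂ) c * b))) = hbeta a b := by
  unfold hbeta; rw [hrho_aut' lam c a b hl hc ha hb]

lemma hdq_congr' (z₁ w₁ z₂ w₂ : ℕ → ℂ) (n : ℕ) (hz : ∀ i < n, z₁ i = z₂ i)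
    (hw : ∀ i < n, w₁ i = w₂ i) :
    ∀ k j, k < n → j < n → hdq z₁ w₁ k j = hdq z₂ w₂ k j := by
  intro k
  induction k with
  | zero => intro j _ hj; simp only [hdq]; exact hw j hj
  | succ k ih =>
    intro j hk hj
    have hk' : k < n := Nat.lt_of_succ_lt hk
    simp only [hdq]
    rw [ih j hk' hj, ih k hk' hk', hz j hj, hz k hk']

def autFactor (lam c : ℂ) (z : ℕ → ℂ) : ℕ → ℂ
  | 0 => 1
  | k + 1 => autFactor lam c z k /
      (lam * ((starRingEnd ℂ) (1 - (starRingEnd ℂ) c * z k) / (1 - (starRingEnd ℂ) c * z k)))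

lemma autFactor_unimod (lam c : ℂ) (z : ℕ → ℂ) (hl : ‖lam‖ = 1)
    (hc : ‖c‖ < 1) (hz : ∀ j, ‖z j‖ < 1) (k : ℕ) :
    ‖autFactor lam c z k‖ = 1 := by
  induction k with
  | zero => simp [autFactor]
  | succ k ih =>
    have hne : 1 - (starRingEnd ℂ) c * z k ≠ 0 := one_sub_conj_ne' (z k) c (hz k) hc
    simp only [autFactor, norm_div, norm_mul, ih, hl, Complex.norm_conj, one_mul,
      div_self (norm_ne_zero_iff.mpr hne), mul_one]
    norm_num

lemma hdq_aut' (lam c : ℂ) (z w : ℕ → ℂ) (hl : ‖lam‖ = 1)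
    (hc : ‖c‖ < 1) (hz : ∀ j, ‖z j‖ < 1) :
    ∀ k j, hdq (fun i => lam * ((z i - c) / (1 - (starRingEnd ℂ) c * z i))) w k j
      = autFactor lam c z k * hdq z w k j := by
  intro k
  induction k with
  | zero => intro j; simp [hdq, autFactor]
  | succ k ih =>
    intro j
    have hu : (starRingEnd ℂ) (autFactor lam c z k) * autFactor lam c z k = 1 :=
      unimod_of_abs' (autFactor_unimod lam c z hl hc hz k)
    simp only [hdq, ih]
    rw [mstar_unimod' _ _ _ hu, mstar_aut' lam c (z j) (z k) hl hc (hz j) (hz k)]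
    rw [mul_div_mul_comm]
    rfl

lemma compat_transfer (nn : ℕ) (hnn : 1 ≤ nn) (ε : ℝ) (lam c : ℂ)
    (hl : ‖lam‖ = 1) (hc : ‖c‖ < 1) (Z W : ℕ → ℂ)
    (hZ : ∀ j, ‖Z j‖ < 1)
    (h : CompatCond nn ε (fun j => lam * ((Z j - c) / (1 - (starRingEnd ℂ) c * Z j))) W) :
    CompatCond nn ε Z W := by
  intro σ hσ
  obtain ⟨h1, h2⟩ := h σ hσ
  have hzD : ∀ j, ‖seqSel Z σ j‖ < 1 := by
    intro j; unfold seqSel; split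
    · exact hZ _
    · simp
  have hsel : ∀ i < nn,
      seqSel (fun j => lam * ((Z j - c) / (1 - (starRingEnd ℂ) c * Z j))) σ i
        = lam * ((seqSel Z σ i - c) / (1 - (starRingEnd ℂ) c * seqSel Z σ i)) := by
    intro i hi
    simp only [seqSel, dif_pos hi]
  have key : ∀ k j, k < nn → j < nn →
      hdq (seqSel (fun j => lam * ((Z j - c) / (1 - (starRingEnd ℂ) c * Z j))) σ)
          (seqSel W σ) k j
        = autFactor lam c (seqSel Z σ) k * hdq (seqSel Z σ) (seqSel W σ) k j := by
    intro k j hk hj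
    rw [hdq_congr' _ (seqSel W σ)
      (fun i => lam * ((seqSel Z σ i - c) / (1 - (starRingEnd ℂ) c * seqSel Z σ i)))
      (seqSel W σ) nn hsel (fun _ _ => rfl) k j hk hj]
    exact hdq_aut' lam c (seqSel Z σ) (seqSel W σ) hl hc hzD k j
  have hlt : nn - 1 < nn := Nat.sub_lt hnn one_pos
  have hsub : nn - 2 ≤ nn - 1 := Nat.sub_le_sub_left one_le_two nn
  constructor
  · intro k i hk hki hi
    have hkn : k < nn := lt_of_le_of_lt (hk.trans hsub) hlt
    have hin : i < nn := lt_of_le_of_lt hi hlt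
    have h0 := h1 k i hk hki hi
    rw [key k i hkn hin] at h0
    simp only [unitD, Set.mem_setOf_eq] at h0 ⊢
    rwa [norm_mul, autFactor_unimod lam c (seqSel Z σ) hl hc hzD k, one_mul] at h0
  · intro k i j hk hki hi hkj hj hij
    have hkn : k < nn := lt_of_le_of_lt (hk.trans hsub) hlt
    have hin : i < nn := lt_of_le_of_lt hi hlt
    have hjn : j < nn := lt_of_le_of_lt hj hlt
    have h0 := h2 k i j hk hki hi hkj hj hij
    rw [key k i hkn hin, key k j hkn hjn,
      hbeta_unimod' _ _ _ (unimod_of_abs' (autFactor_unimod lam c (seqSel Z σ) hl hc hzD k)),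
      hsel i hin, hsel j hjn,
      hbeta_aut' lam c (seqSel Z σ i) (seqSel Z σ j) hl hc (hzD i) (hzD j)] at h0
    exact h0

lemma aut_diff (lam c : ℂ) (hc : ‖c‖ < 1) :
    DifferentiableOn ℂ (fun z => lam * ((z - c) / (1 - (starRingEnd ℂ) c * z))) unitD := by
  apply DifferentiableOn.const_mul
  apply DifferentiableOn.div
  · exact differentiableOn_id.sub (differentiableOn_const c)
  · exact (differentiableOn_const 1).sub ((differentiableOn_const _).mul differentiableOn_id)
  · intro z hz
    exact one_sub_conj_ne' z c hz hc

lemma aut_left_inv (lam c z : ℂ) (hl : ‖lam‖ = 1) (hc : ‖c‖ < 1)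
    (hz : ‖z‖ < 1) :
    (starRingEnd ℂ) lam * ((lam * ((z - c) / (1 - (starRingEnd ℂ) c * z)) - (-lam * c))
      / (1 - (starRingEnd ℂ) (-lam * c) * (lam * ((z - c) / (1 - (starRingEnd ℂ) c * z)))))
      = z := by
  have hl1 : (starRingEnd ℂ) lam * lam = 1 := unimod_of_abs' hl
  have hlam : lam ≠ 0 := by intro h; rw [h] at hl; simp at hl
  have hli : (starRingEnd ℂ) lam = lam⁻¹ := eq_inv_of_mul_eq_one_left hl1
  have hd : 1 - (starRingEnd ℂ) c * z ≠ 0 := one_sub_conj_ne' z c hz hc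
  have hcc : 1 - (starRingEnd ℂ) c * c ≠ 0 := one_sub_conj_ne' c c hc hc
  have hd' : 1 - z * (starRingEnd ℂ) c ≠ 0 := by rw [mul_comm]; exact hd
  have e1 : 1 - (starRingEnd ℂ) (-lam * c) * (lam * ((z - c) / (1 - (starRingEnd ℂ) c * z)))
      = (1 - (starRingEnd ℂ) c * c) / (1 - (starRingEnd ℂ) c * z) := by
    rw [map_mul, map_neg, hli]
    field_simp
    ring
  rw [e1]
  have e2 : lam * ((z - c) / (1 - (starRingEnd ℂ) c * z)) - (-lam * c)
      = lam * (z * (1 - (starRingEnd ℂ) c * c)) / (1 - (starRingEnd ℂ) c * z) := by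
    field_simp
    ring
  rw [e2, hli]
  field_simp


/-- Interpolating sequences of order n-1 are conformally invariant, with the same
interpolation constant. -/
theorem interpolating_conformal_invariant (n : ℕ) (hn : 2 ≤ n) (Z : ℕ → ℂ)
    (hinj : Function.Injective Z) (hZ : ∀ j, Z j ∈ unitD) (ε : ℝ) (hε : 0 < ε)
    (hint : IsInterpolatingOfOrderWith (n - 1) Z ε)
    (τ : ℂ → ℂ) (hτ : IsDiscAut τ) :
    IsInterpolatingOfOrderWith (n - 1) (fun j => τ (Z j)) ε := by
  obtain ⟨lam, c, hl, hcD, hτeq⟩ := hτ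
  have hc : ‖c‖ < 1 := hcD
  have hZ' : ∀ j, ‖Z j‖ < 1 := fun j => hZ j
  intro W hW hcomp
  have hτfun : (fun j => τ (Z j))
      = fun j => lam * ((Z j - c) / (1 - (starRingEnd ℂ) c * Z j)) := by
    funext j; exact hτeq (Z j)
  rw [hτfun] at hcomp
  have hcomp' : CompatCond (n - 1 + 1) ε Z W :=
    compat_transfer (n - 1 + 1) (Nat.le_add_left 1 (n - 1)) ε lam c hl hc Z W hZ' hcomp
  obtain ⟨g, hgdiff, hgmaps, hgval⟩ := hint W hW hcomp'
  set lam' := (starRingEnd ℂ) lam with hlam'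
  set c' := -lam * c with hc'
  have hl' : ‖lam'‖ = 1 := by rw [hlam', Complex.norm_conj, hl]
  have hc'' : ‖c'‖ < 1 := by
    rw [hc']
    calc ‖-lam * c‖ = ‖lam‖ * ‖c‖ := by
          rw [norm_mul, norm_neg]
      _ < 1 := by rw [hl, one_mul]; exact hc
  set σi : ℂ → ℂ := fun w => lam' * ((w - c') / (1 - (starRingEnd ℂ) c' * w)) with hσi
  have hσimaps : Set.MapsTo σi unitD unitD := fun w hw => aut_maps' lam' c' w hl' hc'' hw
  refine ⟨g ∘ σi, ?_, ?_, ?_⟩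
  · exact hgdiff.comp (aut_diff lam' c' hc'') hσimaps
  · exact hgmaps.comp hσimaps
  · intro j
    show g (σi (τ (Z j))) = W j
    rw [hτeq (Z j)]
    have : σi (lam * ((Z j - c) / (1 - (starRingEnd ℂ) c * Z j))) = Z j := by
      rw [hσi]
      exact aut_left_inv lam c (Z j) hl hc (hZ' j)
    rw [this]
    exact hgval j
end
end

section
/- For every a > 0 the function x ↦ (e^{ax}−1)/(x·(e^{ax}+1)) is strictly decreasing on (0,∞); consequently (e^{ax}−1)/(x·(e^{ax}+1)) < a/2 for every x > 0, and (e^{ax}−1)/(x·(e^{ax}+1)) → a/2 as x → 0+. -/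
open Real Filter Set

/-- Key inequality: for `t > 0`, `2 t e^t + 1 < e^{2t}`. -/
lemma key_exp_ineq (t : ℝ) (ht : 0 < t) : 2 * t * Real.exp t + 1 < Real.exp (2 * t) := by
  have hs : t < Real.sinh t := Real.self_lt_sinh_iff.mpr ht
  have hsinh : Real.sinh t = (Real.exp t - Real.exp (-t)) / 2 := Real.sinh_eq t
  have h1 : Real.exp (2 * t) = Real.exp t * Real.exp t := by
    rw [two_mul, Real.exp_add]
  have h2 : Real.exp t * Real.exp (-t) = 1 := by
    rw [← Real.exp_add]; simp
  nlinarith [Real.exp_pos t, Real.exp_pos (-t)]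

/-- For a > 0 the function x ↦ (e^{ax}-1)/(x(e^{ax}+1)) is strictly decreasing on
(0,∞), is everywhere below a/2 there, and tends to a/2 as x → 0+. -/
theorem strictAnti_exp_quotient (a : ℝ) (ha : 0 < a) :
    StrictAntiOn (fun x : ℝ => (Real.exp (a * x) - 1) / (x * (Real.exp (a * x) + 1)))
      (Set.Ioi (0 : ℝ)) ∧
    (∀ x : ℝ, 0 < x →
      (Real.exp (a * x) - 1) / (x * (Real.exp (a * x) + 1)) < a / 2) ∧
    Filter.Tendsto (fun x : ℝ => (Real.exp (a * x) - 1) / (x * (Real.exp (a * x) + 1)))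
      (nhdsWithin 0 (Set.Ioi 0)) (nhds (a / 2)) := by
  set f : ℝ → ℝ := fun x => (Real.exp (a * x) - 1) / (x * (Real.exp (a * x) + 1)) with hf
  -- Part 1: strict antitone
  have hanti : StrictAntiOn f (Set.Ioi (0 : ℝ)) := by
    apply strictAntiOn_of_deriv_neg (convex_Ioi 0)
    · apply ContinuousOn.div
      · fun_prop
      · fun_prop
      · intro x hx
        have hx0 : (0:ℝ) < x := hx
        have := Real.exp_pos (a * x)
        positivity
    · intro x hx
      rw [interior_Ioi] at hx
      have hx0 : (0:ℝ) < x := hx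
      have hd : (0:ℝ) < x * (Real.exp (a * x) + 1) := by
        have := Real.exp_pos (a * x); positivity
      have hmul : HasDerivAt (fun y : ℝ => a * y) a x := by
        simpa using (hasDerivAt_id x).const_mul a
      have hexp : HasDerivAt (fun y : ℝ => Real.exp (a * y)) (Real.exp (a * x) * a) x :=
        hmul.exp
      have hn : HasDerivAt (fun y : ℝ => Real.exp (a * y) - 1) (Real.exp (a * x) * a) x :=
        hexp.sub_const 1
      have hdden : HasDerivAt (fun y : ℝ => y * (Real.exp (a * y) + 1))
          (1 * (Real.exp (a * x) + 1) + x * (Real.exp (a * x) * a)) x :=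
        (hasDerivAt_id x).mul (hexp.add_const 1)
      have hder : HasDerivAt f
          ((Real.exp (a * x) * a * (x * (Real.exp (a * x) + 1)) -
            (Real.exp (a * x) - 1) *
              (1 * (Real.exp (a * x) + 1) + x * (Real.exp (a * x) * a))) /
            (x * (Real.exp (a * x) + 1)) ^ 2) x := hn.div hdden hd.ne'
      rw [hder.deriv]
      apply div_neg_of_neg_of_pos _ (by positivity)
      have hkey := key_exp_ineq (a * x) (by positivity)
      have h1 : Real.exp (2 * (a * x)) = Real.exp (a * x) * Real.exp (a * x) := by
        rw [two_mul, Real.exp_add]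
      nlinarith [Real.exp_pos (a * x)]
  -- Part 3: limit
  have hlim : Filter.Tendsto f (nhdsWithin 0 (Set.Ioi 0)) (nhds (a / 2)) := by
    have hslope : Filter.Tendsto (fun x : ℝ => (Real.exp (a * x) - 1) / x)
        (nhdsWithin 0 (Set.Ioi 0)) (nhds a) := by
      have hexp : HasDerivAt (fun y : ℝ => Real.exp (a * y)) a 0 := by
        have hmul : HasDerivAt (fun y : ℝ => a * y) a 0 := by
          simpa using (hasDerivAt_id 0).const_mul a
        simpa using hmul.exp
      have := (hasDerivAt_iff_tendsto_slope.mp hexp).mono_left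
        (nhdsWithin_mono 0 (fun y hy => Set.mem_compl_singleton_iff.mpr (ne_of_gt hy)))
      apply this.congr'
      filter_upwards [self_mem_nhdsWithin] with y hy
      have hy0 : y ≠ 0 := ne_of_gt hy
      simp [slope_def_field, hy0]
    have hinv : Filter.Tendsto (fun x : ℝ => (Real.exp (a * x) + 1)⁻¹)
        (nhdsWithin 0 (Set.Ioi 0)) (nhds (2⁻¹)) := by
      have hc : Continuous (fun x : ℝ => (Real.exp (a * x) + 1)⁻¹) := by
        apply Continuous.inv₀ (by fun_prop)
        intro x
        have := Real.exp_pos (a * x); positivity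
      have := (hc.tendsto 0).mono_left (nhdsWithin_le_nhds (s := Set.Ioi (0:ℝ)))
      norm_num at this; convert this using 2; norm_num
    have := hslope.mul hinv
    have heq : a * 2⁻¹ = a / 2 := by ring
    rw [heq] at this
    apply this.congr
    intro y
    simp only [hf, div_eq_mul_inv, mul_inv]
    ring
  refine ⟨hanti, ?_, hlim⟩
  -- Part 2 from parts 1 and 3
  intro x hx
  have hx2 : x / 2 ∈ Set.Ioi (0:ℝ) := Set.mem_Ioi.mpr (by linarith)
  have hlt : f x < f (x / 2) := hanti hx2 (by exact hx) (by linarith)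
  have hle : f (x / 2) ≤ a / 2 := by
    apply ge_of_tendsto hlim
    filter_upwards [Ioo_mem_nhdsGT_of_mem (Set.left_mem_Ico.mpr (by linarith : (0:ℝ) < x / 2))] with y hy
    exact le_of_lt (hanti (Set.mem_Ioi.mpr hy.1) hx2 hy.2)
  calc f x < f (x/2) := hlt
    _ ≤ a / 2 := hle
end
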